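/- arXiv:2202.09293 — 2 statements merged into one kernel-verified Lean document; each statement's English description precedes it below -/
import Mathlib

section
/- Let v : X → Y and u : X' → Y' be maps of finite sets, and let σ_X : X → X', σ_Y : Y → Y' be bijections with u ∘ σ_X = σ_Y ∘ v. Equip X, X', Y, Y' with total orders, and let X̄, X̄' be the reordered versions (the unique total orders making x ↦ (v(x),x) and x' ↦ (u(x'),x') order-preserving into the lexicographic products Ȳ ×ˡ X and Ȳ' ×ˡ X'). Suppose σ_Y : Ȳ → Ȳ' is order-preserving. Then σ_X : X̄ → X̄' is order-preserving if and only if σ_X is order-preserving (for the original orders) on each fibre of v. -/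
/-- Across fibres the order is forced by `g`; inside a fibre it is the hypothesis `hf`. -/
theorem monotone_of_monotone_on_fibres {X X' Y Y' : Type*} [Preorder X] [Preorder X']
    [PartialOrder Y] [Preorder Y'] {v : X → Y} {u : X' → Y'} {f : X → X'} {g : Y → Y'}
    (hv : Monotone v) (hu : ∀ x₁ x₂, u x₁ < u x₂ → x₁ ≤ x₂) (hg : StrictMono g)
    (hfg : ∀ x, u (f x) = g (v x)) (hf : ∀ x₁ x₂, v x₁ = v x₂ → x₁ ≤ x₂ → f x₁ ≤ f x₂) :
    Monotone f := by
  intro x₁ x₂ hx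
  rcases (hv hx).lt_or_eq with hlt | heq
  · exact hu _ _ (by rw [hfg, hfg]; exact hg hlt)
  · exact hf x₁ x₂ heq hx

theorem stmt3_general {X X' Y Y' : Type*}
    [LinearOrder Y] [LinearOrder Y']
    (v : X → Y) (u : X' → Y') (σX : X ≃ X') (σY : Y ≃ Y')
    (hcomm : ∀ x, u (σX x) = σY (v x))
    (LX : LinearOrder X) (LX' : LinearOrder X')
    (hLX : ∀ x₁ x₂ : X, LX.le x₁ x₂ ↔ (v x₁ < v x₂ ∨ (v x₁ = v x₂ ∧ x₁ ≤ x₂)))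
    (hLX' : ∀ x₁ x₂ : X', LX'.le x₁ x₂ ↔ (u x₁ < u x₂ ∨ (u x₁ = u x₂ ∧ x₁ ≤ x₂)))
    (hσY : Monotone σY) :
    (∀ x₁ x₂ : X, LX.le x₁ x₂ → LX'.le (σX x₁) (σX x₂)) ↔
      (∀ x₁ x₂ : X, v x₁ = v x₂ → x₁ ≤ x₂ → σX x₁ ≤ σX x₂) := by
  refine ⟨fun h x₁ x₂ _ hx ↦ h x₁ x₂ hx, fun h x₁ x₂ hx ↦ ?_⟩
  have hv : Monotone v := fun x₁ x₂ hx ↦ by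
    rcases (hLX x₁ x₂).1 hx with hlt | ⟨heq, -⟩
    exacts [hlt.le, heq.le]
  have hu : ∀ x₁ x₂, u x₁ < u x₂ → x₁ ≤ x₂ := fun x₁ x₂ hlt ↦ (hLX' x₁ x₂).2 (.inl hlt)
  exact monotone_of_monotone_on_fibres hv hu (hσY.strictMono_of_injective σY.injective) hcomm h hx

/-- Inductive step of the straightening lemma.  Let `v : X → Y`, `u : X' → Y'` be maps of
finite totally ordered sets, `σX, σY` bijections with `u ∘ σX = σY ∘ v`.  Let `LX`
(resp. `LX'`) be the reordered total order on `X` (resp. `X'`), i.e. the unique order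
making `x ↦ (v x, x)` (resp. `x' ↦ (u x', x')`) order-preserving into the lexicographic
product.  If `σY` is order preserving, then `σX` is order preserving for the reordered
orders iff `σX` is order preserving (for the original orders) on each fibre of `v`. -/
theorem stmt3 {X X' Y Y' : Type*} [Fintype X] [Fintype X']
    [LinearOrder X] [LinearOrder X'] [LinearOrder Y] [LinearOrder Y']
    (v : X → Y) (u : X' → Y') (σX : X ≃ X') (σY : Y ≃ Y')
    (hcomm : ∀ x, u (σX x) = σY (v x))
    (LX : LinearOrder X) (LX' : LinearOrder X')
    (hLX : ∀ x₁ x₂ : X, LX.le x₁ x₂ ↔ (v x₁ < v x₂ ∨ (v x₁ = v x₂ ∧ x₁ ≤ x₂)))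
    (hLX' : ∀ x₁ x₂ : X', LX'.le x₁ x₂ ↔ (u x₁ < u x₂ ∨ (u x₁ = u x₂ ∧ x₁ ≤ x₂)))
    (hσY : Monotone σY) :
    (∀ x₁ x₂ : X, LX.le x₁ x₂ → LX'.le (σX x₁) (σX x₂)) ↔
      (∀ x₁ x₂ : X, v x₁ = v x₂ → x₁ ≤ x₂ → σX x₁ ≤ σX x₂) :=
  stmt3_general v u σX σY hcomm LX LX' hLX hLX' hσY
end

section
/- Let C and D be simple k-string diagrams, given by sequences of maps v^i(C) : ⟨ℓ_i(C)⟩ → ⟨ℓ_{i-1}(C)⟩ and v^i(D) : ⟨ℓ_i(D)⟩ → ⟨ℓ_{i-1}(D)⟩. Then π(C) = π(D) (they induce the same globular pasting diagram) if and only if ℓ_i(C) = ℓ_i(D) for all i and there exist permutations σ_i of ⟨ℓ_i(D)⟩, order-preserving on each fibre of v^i(D), such that v^i(C) = σ_{i-1} ∘ v^i(D) ∘ σ_i⁻¹ for all i (with σ₀ = id). -/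
/-- A simple k-string diagram: a sequence of finite totally ordered sets
`⟨ℓ_k⟩ → ⋯ → ⟨ℓ₁⟩ → ⟨ℓ₀⟩ = ⟨1⟩` with arbitrary (not necessarily monotone) maps. -/
structure SSD (k : ℕ) where
  ℓ : ℕ → ℕ
  base : ℓ 0 = 1
  high : ∀ i, k < i → ℓ i = 0
  v : ∀ i, Fin (ℓ (i + 1)) → Fin (ℓ i)

/-- A globular pasting diagram: all level maps are monotone. -/
def IsPasting {k : ℕ} (D : SSD k) : Prop := ∀ i, Monotone (D.v i)

/-- A levelwise bijection from `C` to `D` commuting with the level maps and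
order-preserving on the fibres of the level maps of `C`.  `π(C) = P` precisely when `P`
is a pasting diagram admitting such an isomorphism from `C`. -/
def FibreOrdIso {k : ℕ} (C D : SSD k) : Prop :=
  ∃ σ : ∀ i, Fin (C.ℓ i) ≃ Fin (D.ℓ i),
    (∀ i (x : Fin (C.ℓ (i + 1))), σ i (C.v i x) = D.v i (σ (i + 1) x)) ∧
    (∀ i (x y : Fin (C.ℓ (i + 1))), C.v i x = C.v i y → x ≤ y → σ (i + 1) x ≤ σ (i + 1) y)

private lemma key_le {a b c d n : ℕ} (hb : b < n) (h : a * n + b ≤ c * n + d) (hd : d < n) :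
    a ≤ c := by
  by_contra hac
  push_neg at hac
  have : (c + 1) * n ≤ a * n := Nat.mul_le_mul_right n hac
  nlinarith

/-- The key used to sort level `i+1`, given a permutation of level `i`. -/
private def key {k : ℕ} (D : SSD k) (i : ℕ) (σ : Equiv.Perm (Fin (D.ℓ i)))
    (x : Fin (D.ℓ (i + 1))) : ℕ :=
  (σ (D.v i x)).val * D.ℓ (i + 1) + x.val

private lemma key_inj {k : ℕ} (D : SSD k) (i : ℕ) (σ : Equiv.Perm (Fin (D.ℓ i))) :
    Function.Injective (key D i σ) := by
  intro x y h
  unfold key at h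
  have h1 : (σ (D.v i x)).val ≤ (σ (D.v i y)).val := key_le x.isLt h.le y.isLt
  have h2 : (σ (D.v i y)).val ≤ (σ (D.v i x)).val := key_le y.isLt h.ge x.isLt
  have h3 := le_antisymm h1 h2
  rw [h3] at h
  exact Fin.ext (by omega)

noncomputable def pastingPerm {k : ℕ} (D : SSD k) : ∀ i, Equiv.Perm (Fin (D.ℓ i))
  | 0 => Equiv.refl _
  | (i + 1) => (Tuple.sort (key D i (pastingPerm D i)))⁻¹

private lemma sortKey_strictMono {k : ℕ} (D : SSD k) (i : ℕ) (σ : Equiv.Perm (Fin (D.ℓ i))) :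
    StrictMono (key D i σ ∘ Tuple.sort (key D i σ)) :=
  (Tuple.monotone_sort _).strictMono_of_injective
    ((key_inj D i σ).comp (Equiv.injective _))

theorem exists_pasting {k : ℕ} (D : SSD k) : ∃ P : SSD k, IsPasting P ∧ FibreOrdIso D P := by
  set σ := pastingPerm D with hσ
  set τ : ∀ i, Equiv.Perm (Fin (D.ℓ (i+1))) := fun i => Tuple.sort (key D i (σ i)) with hτ
  have hτσ : ∀ i, σ (i + 1) = (τ i)⁻¹ := fun i => rfl
  refine ⟨⟨D.ℓ, D.base, D.high, fun i y => σ i (D.v i ((σ (i+1)).symm y))⟩, ?_, ?_⟩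
  · intro i y y' hy
    have h1 : key D i (σ i) (τ i y) ≤ key D i (σ i) (τ i y') :=
      (sortKey_strictMono D i (σ i)).monotone hy
    have h2 : ((σ i) (D.v i (τ i y))).val ≤ ((σ i) (D.v i (τ i y'))).val :=
      key_le (τ i y).isLt h1 (τ i y').isLt
    show σ i (D.v i ((σ (i+1)).symm y)) ≤ σ i (D.v i ((σ (i+1)).symm y'))
    have : ∀ z, (σ (i+1)).symm z = τ i z := fun z => rfl
    rw [this, this]
    exact h2
  · refine ⟨fun i => σ i, fun i x => ?_, fun i x y hxy hle => ?_⟩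
    · show σ i (D.v i x) = σ i (D.v i ((σ (i+1)).symm (σ (i+1) x)))
      simp
    · -- σ (i+1) x ≤ σ (i+1) y
      have hkey : key D i (σ i) x ≤ key D i (σ i) y := by
        unfold key
        rw [hxy]
        exact Nat.add_le_add_left hle _
      show σ (i+1) x ≤ σ (i+1) y
      rw [← (sortKey_strictMono D i (σ i)).le_iff_le]
      show key D i (σ i) (τ i ((τ i)⁻¹ x)) ≤ key D i (σ i) (τ i ((τ i)⁻¹ y))
      simp only [Equiv.Perm.coe_inv, Equiv.apply_symm_apply]
      exact hkey

lemma FibreOrdIso.trans' {k : ℕ} {A B P : SSD k} (h1 : FibreOrdIso A B) (h2 : FibreOrdIso B P) :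
    FibreOrdIso A P := by
  obtain ⟨α, hαc, hαf⟩ := h1
  obtain ⟨β, hβc, hβf⟩ := h2
  refine ⟨fun i => (α i).trans (β i), fun i x => ?_, fun i x y hxy hle => ?_⟩
  · simp only [Equiv.trans_apply, hαc, hβc]
  · exact hβf i _ _ (by rw [← hαc, ← hαc, hxy]) (hαf i x y hxy hle)

/-- Two simple k-string diagrams have the same underlying globular pasting diagram iff
they have the same level sizes and are related by levelwise permutations which are
order-preserving on the fibres, conjugating the level maps. -/
theorem stmt4 {k : ℕ} (C D : SSD k) :
    (∃ P : SSD k, IsPasting P ∧ FibreOrdIso C P ∧ FibreOrdIso D P) ↔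
      ∃ h : ∀ i, C.ℓ i = D.ℓ i, ∃ σ : ∀ i, Equiv.Perm (Fin (D.ℓ i)),
        (∀ x : Fin (D.ℓ 0), σ 0 x = x) ∧
        (∀ i (x y : Fin (D.ℓ (i + 1))),
          D.v i x = D.v i y → x ≤ y → σ (i + 1) x ≤ σ (i + 1) y) ∧
        (∀ i (x : Fin (C.ℓ (i + 1))),
          (C.v i x : ℕ) =
            (σ i (D.v i ((σ (i + 1)).symm (Fin.cast (h (i + 1)) x))) : ℕ)) := by
  constructor
  · rintro ⟨P, _, ⟨σC, hCc, hCf⟩, ⟨σD, hDc, hDf⟩⟩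
    have h : ∀ i, C.ℓ i = D.ℓ i := fun i =>
      Fin.equiv_iff_eq.mp ⟨(σC i).trans (σD i).symm⟩
    refine ⟨h, fun i => ((σD i).trans (σC i).symm).trans (finCongr (h i)), ?_, ?_, ?_⟩
    · intro x
      have : Subsingleton (Fin (D.ℓ 0)) := by rw [D.base]; infer_instance
      exact Subsingleton.elim _ _
    · intro i x y hxy hle
      simp only [Equiv.trans_apply]
      have hP : P.v i (σD (i+1) x) = P.v i (σD (i+1) y) := by
        rw [← hDc, ← hDc, hxy]
      set a := (σC (i+1)).symm (σD (i+1) x) with ha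
      set b := (σC (i+1)).symm (σD (i+1) y) with hb
      have hCab : C.v i a = C.v i b := by
        apply (σC i).injective
        rw [hCc, hCc, ha, hb, Equiv.apply_symm_apply, Equiv.apply_symm_apply, hP]
      have hab : a ≤ b := by
        by_contra hba
        push_neg at hba
        have := hCf i b a hCab.symm hba.le
        rw [ha, hb, Equiv.apply_symm_apply, Equiv.apply_symm_apply] at this
        have hxy' : σD (i+1) x = σD (i+1) y := le_antisymm (hDf i x y hxy hle) this
        have : x = y := (σD (i+1)).injective hxy'
        subst this
        exact absurd rfl hba.ne
      exact hab
    · intro i x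
      have e1 : ((((σD (i+1)).trans (σC (i+1)).symm).trans (finCongr (h (i+1)))).symm)
          (Fin.cast (h (i+1)) x) = (σD (i+1)).symm (σC (i+1) x) := by
        simp [Equiv.symm_trans_apply]
      simp only [Equiv.trans_apply, e1, finCongr_apply]
      set z := D.v i ((σD (i+1)).symm (σC (i+1) x)) with hz
      have h1 : σD i z = σC i (C.v i x) := by
        rw [hz, hDc, Equiv.apply_symm_apply, ← hCc]
      have h2 : (σC i).symm (σD i z) = C.v i x := by rw [h1, Equiv.symm_apply_apply]
      rw [h2]
      simp
  · rintro ⟨h, σ, _, hσf, hσv⟩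
    obtain ⟨P, hP, hDP⟩ := exists_pasting D
    refine ⟨P, hP, FibreOrdIso.trans' ?_ hDP, hDP⟩
    -- FibreOrdIso C D via α i = (σ i).symm ∘ Fin.cast
    refine ⟨fun i => (finCongr (h i)).trans (σ i).symm, fun i x => ?_, fun i x y hxy hle => ?_⟩
    · simp only [Equiv.trans_apply, finCongr_apply]
      apply (σ i).injective
      rw [Equiv.apply_symm_apply]
      apply Fin.ext
      have := hσv i x
      simpa using this
    · simp only [Equiv.trans_apply, finCongr_apply]
      set x' := (σ (i+1)).symm (Fin.cast (h (i+1)) x) with hx'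
      set y' := (σ (i+1)).symm (Fin.cast (h (i+1)) y) with hy'
      have hD : D.v i x' = D.v i y' := by
        apply (σ i).injective
        apply Fin.ext
        rw [← hσv i x, ← hσv i y, hxy]
      by_contra hba
      push_neg at hba
      have := hσf i y' x' hD.symm hba.le
      rw [hx', hy', Equiv.apply_symm_apply, Equiv.apply_symm_apply] at this
      have hvv : (x : ℕ) = (y : ℕ) := le_antisymm hle (by simpa using this)
      have : x = y := Fin.ext hvv
      subst this
      exact absurd rfl hba.ne
end
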